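/- arXiv:2211.04075 — 2 statements merged into one kernel-verified Lean document; each statement's English description precedes it below -/
import Mathlib

section
/- Let G be a connected graph and n ≥ 1. The graph Δ_G^n, whose vertices are walks of length n on G and whose edges join walks p, q such that p_i and q_i are adjacent in G for all i (i.e., p and q can appear as adjacent rows in a homomorphism from a 2×(n+1) grid to G), is bipartite if and only if G is bipartite. -/
/-- An undirected graph (self-loops allowed) given by a symmetric adjacency relation. -/
structure LoopGraph (V : Type*) where
  Adj : V → V → Prop
  symm : ∀ {a b : V}, Adj a b → Adj b a

/-- A walk of length `n` on `G`. -/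
def IsWalk {V : Type*} (G : LoopGraph V) {n : ℕ} (p : Fin (n + 1) → V) : Prop :=
  ∀ i : Fin n, G.Adj (p i.castSucc) (p i.succ)

/-- `G` is bipartite. -/
def LoopGraph.Bipartite {V : Type*} (G : LoopGraph V) : Prop :=
  ∃ f : V → Bool, ∀ a b : V, G.Adj a b → f a ≠ f b

/-- `G` is connected: any two vertices are joined by a walk. -/
def LoopGraph.Connected {V : Type*} (G : LoopGraph V) : Prop :=
  ∀ u v : V, ∃ (n : ℕ) (p : Fin (n + 1) → V),
    IsWalk G p ∧ p 0 = u ∧ p (Fin.last n) = v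

/-- The vertices of `Δ_G^n`: walks of length `n` on `G`. -/
def WalkN {V : Type*} (G : LoopGraph V) (n : ℕ) : Type _ :=
  {p : Fin (n + 1) → V // IsWalk G p}

/-- The graph `Δ_G^n` on walks of length `n`, where walks `p, q` are adjacent
when `p_i` and `q_i` are adjacent in `G` for all `i`. -/
def Delta {V : Type*} (G : LoopGraph V) (n : ℕ) : LoopGraph (WalkN G n) where
  Adj p q := ∀ i : Fin (n + 1), G.Adj (p.1 i) (q.1 i)
  symm h := fun i => G.symm (h i)

/-!
A graph is bipartite iff it has no closed walk of odd length (a loop being one of length 1).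
Unroll a closed walk of odd length `L` in `G` into an `L`-periodic infinite walk `c`; the windows
`j ↦ (c j, c (j+1), …, c (j+n))` then form an `L`-periodic infinite walk in `Δ_G^n`, i.e. an odd
closed walk there. Conversely a 2-colouring of `G` colours `Δ_G^n` through the first vertex of
each walk.
-/

namespace LoopGraph

variable {V : Type*} (G : LoopGraph V)

def IsInfiniteWalk (c : ℕ → V) : Prop :=
  ∀ i, G.Adj (c i) (c (i + 1))

variable {G}

theorem Bipartite.even_of_periodic {c : ℕ → V} {L : ℕ} (hG : G.Bipartite)
    (hc : G.IsInfiniteWalk c) (hper : Function.Periodic c L) : Even L := by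
  obtain ⟨f, hf⟩ := hG
  have alternating : ∀ i, (f (c i) = f (c 0) ↔ Even i) := by
    intro i
    induction i with
    | zero => simp
    | succ i ih =>
      have hflip := hf _ _ (hc i)
      rw [Nat.even_add_one, ← ih]
      revert hflip
      cases f (c i) <;> cases f (c (i + 1)) <;> cases f (c 0) <;> simp
  exact (alternating L).1 (by simpa using congrArg f (hper 0))

theorem Bipartite.of_colorable_fromRel (hloop : ∀ v, ¬G.Adj v v)
    (hcol : (SimpleGraph.fromRel G.Adj).Colorable 2) : G.Bipartite := by
  obtain ⟨C⟩ := hcol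
  refine ⟨finTwoEquiv ∘ C, fun a b hab => ?_⟩
  have hne : a ≠ b := by rintro rfl; exact hloop a hab
  exact finTwoEquiv.injective.ne (C.valid ((SimpleGraph.fromRel_adj _ _ _).2 ⟨hne, .inl hab⟩))

theorem isInfiniteWalk_getVert_mod {u : V} (w : (SimpleGraph.fromRel G.Adj).Walk u u)
    (hw : 0 < w.length) : G.IsInfiniteWalk (fun i => w.getVert (i % w.length)) := by
  intro i
  have hadj := ((SimpleGraph.fromRel_adj _ _ _).1 (w.adj_getVert_succ (Nat.mod_lt i hw))).2
  have hnext : w.getVert ((i + 1) % w.length) = w.getVert (i % w.length + 1) := by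
    rw [← Nat.mod_add_mod]
    rcases Nat.lt_or_ge (i % w.length + 1) w.length with h | h
    · rw [Nat.mod_eq_of_lt h]
    · rw [show i % w.length + 1 = w.length by have := Nat.mod_lt i hw; omega,
        Nat.mod_self, w.getVert_zero, w.getVert_length]
  dsimp only
  rw [hnext]
  exact hadj.elim id G.symm

theorem exists_odd_periodic_of_not_bipartite (hG : ¬G.Bipartite) :
    ∃ L, Odd L ∧ ∃ c : ℕ → V, G.IsInfiniteWalk c ∧ Function.Periodic c L := by
  by_cases hloop : ∃ v, G.Adj v v
  · obtain ⟨v, hv⟩ := hloop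
    exact ⟨1, odd_one, fun _ => v, fun _ => hv, fun _ => rfl⟩
  push Not at hloop
  have hcol := mt (Bipartite.of_colorable_fromRel hloop) hG
  rw [SimpleGraph.two_colorable_iff_forall_loop_even] at hcol
  push Not at hcol
  obtain ⟨u, w, heven⟩ := hcol
  have hodd := Nat.not_even_iff_odd.1 heven
  exact ⟨w.length, hodd, _, isInfiniteWalk_getVert_mod w hodd.pos,
    fun i => by simp only [Nat.add_mod_right]⟩

def windows {c : ℕ → V} (hc : G.IsInfiniteWalk c) (n : ℕ) (j : ℕ) : WalkN G n :=
  ⟨fun i => c (j + i), fun i => by simpa [Nat.add_assoc] using hc (j + i)⟩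

theorem isInfiniteWalk_windows {c : ℕ → V} (hc : G.IsInfiniteWalk c) (n : ℕ) :
    (Delta G n).IsInfiniteWalk (windows hc n) := fun j i => by
  simpa [windows, Nat.add_right_comm] using hc (j + i)

theorem periodic_windows {c : ℕ → V} {L : ℕ} (hc : G.IsInfiniteWalk c)
    (hper : Function.Periodic c L) (n : ℕ) : Function.Periodic (windows hc n) L := fun j =>
  Subtype.ext <| funext fun i => by simpa [windows, Nat.add_right_comm] using hper (j + i)

end LoopGraph

theorem stmt_3_general {V : Type*} (G : LoopGraph V) (n : ℕ) :
    (Delta G n).Bipartite ↔ G.Bipartite := by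
  constructor
  · intro hΔ
    by_contra hG
    obtain ⟨L, hL, c, hc, hper⟩ := LoopGraph.exists_odd_periodic_of_not_bipartite hG
    exact Nat.not_even_iff_odd.2 hL <| hΔ.even_of_periodic
      (LoopGraph.isInfiniteWalk_windows hc n) (LoopGraph.periodic_windows hc hper n)
  · rintro ⟨f, hf⟩
    exact ⟨fun p => f (p.1 0), fun p q hpq => hf _ _ (hpq 0)⟩

/-- For a connected graph `G` and `n ≥ 1`, the graph `Δ_G^n` is bipartite if and
only if `G` is bipartite. -/
theorem stmt_3 {V : Type*} (G : LoopGraph V) (hconn : G.Connected) (n : ℕ) (hn : 1 ≤ n) :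
    (Delta G n).Bipartite ↔ G.Bipartite :=
  stmt_3_general G n
end

section
/- Let G be a connected graph, let a and b be adjacent vertices of G, and let ψ_{a→b} be the map on non-backtracking walks sending a walk q starting at a to the walk obtained from b⌢q by deleting all backtracks (spines). Then ψ_{a→b} ∘ ψ_{b→a} is the identity on the set of non-backtracking walks starting at b. -/
/-- An undirected graph (self-loops allowed) given by a symmetric adjacency relation. -/
structure AdjGraph (V : Type*) where
  Adj : V → V → Prop
  symm : ∀ {a b : V}, Adj a b → Adj b a

/-- A walk on `G`: a nonempty list of vertices with consecutive vertices adjacent. -/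
def IsWalkL {V : Type*} (G : AdjGraph V) (p : List V) : Prop :=
  p ≠ [] ∧ p.Chain' G.Adj

/-- A walk is non-backtracking when it contains no subword of the form `x y x`. -/
def NonBacktracking {V : Type*} (p : List V) : Prop :=
  ¬ ∃ (l r : List V) (a b : V), p = l ++ a :: b :: a :: r

/-- One spine removal: replace some subword `a b a` by `a`. -/
def SpineStep {V : Type*} (p q : List V) : Prop :=
  ∃ (l r : List V) (a b : V), p = l ++ a :: b :: a :: r ∧ q = l ++ a :: r

open Classical in
/-- Backtrack removal `φ`: a non-backtracking walk obtained from `p` by repeatedly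
removing spines (well defined since the normal form is unique). -/
noncomputable def phi {V : Type*} (p : List V) : List V :=
  if h : ∃ q : List V, Relation.ReflTransGen SpineStep p q ∧ NonBacktracking q
  then h.choose else p

/-- `G` is connected. -/
def AdjGraph.ConnectedL {V : Type*} (G : AdjGraph V) : Prop :=
  ∀ u v : V, ∃ p : List V, IsWalkL G p ∧ p.head? = some u ∧ p.getLast? = some v

/-!
Write `q = b :: t`. If `t` starts with `a`, then `a :: q = a :: b :: a :: r` has a single spine,
at its head, and `ψ_{b→a} q = a :: r`, so that `b :: a :: r = q` is already non-backtracking.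
Otherwise `a :: q` is non-backtracking, and `b :: a :: b :: t` has a single spine, at its head,
whose removal gives back `q`. No confluence of spine removal is needed: a word with a single spine,
whose removal leaves a non-backtracking word, has that word as its only normal form.
-/

section

variable {V : Type*}

theorem NonBacktracking.not_spineStep {p s : List V} (h : NonBacktracking p) :
    ¬ SpineStep p s := by
  rintro ⟨l, r, c, d, hp, -⟩
  exact h ⟨l, r, c, d, hp⟩

theorem NonBacktracking.eq_of_reflTransGen {p s : List V} (h : NonBacktracking p)
    (hs : Relation.ReflTransGen SpineStep p s) : s = p := by
  rcases hs.cases_head with rfl | ⟨m, hm, -⟩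
  · rfl
  · exact absurd hm h.not_spineStep

theorem phi_eq_self {p : List V} (h : NonBacktracking p) : phi p = p := by
  unfold phi
  split
  · next hex => exact h.eq_of_reflTransGen hex.choose_spec.1
  · rfl

theorem NonBacktracking.of_cons {x : V} {p : List V} (h : NonBacktracking (x :: p)) :
    NonBacktracking p := by
  rintro ⟨l, r, c, d, rfl⟩
  exact h ⟨x :: l, r, c, d, rfl⟩

theorem NonBacktracking.cons_cons {x y : V} {t : List V} (h : NonBacktracking (y :: t))
    (ht : ∀ r, t ≠ x :: r) : NonBacktracking (x :: y :: t) := by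
  rintro ⟨_ | ⟨_, l⟩, r, c, d, hp⟩
  · simp only [List.nil_append, List.cons.injEq] at hp
    obtain ⟨rfl, rfl, rfl⟩ := hp
    exact ht r rfl
  · simp only [List.cons_append, List.cons.injEq] at hp
    exact h ⟨l, r, c, d, hp.2⟩

theorem SpineStep.eq_of_cons {x : V} {p s : List V} (h : NonBacktracking p)
    (hs : SpineStep (x :: p) s) : ∃ y r, p = y :: x :: r ∧ s = x :: r := by
  obtain ⟨_ | ⟨_, l⟩, r, c, d, hp, rfl⟩ := hs
  · simp only [List.nil_append, List.cons.injEq] at hp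
    obtain ⟨rfl, rfl⟩ := hp
    exact ⟨d, r, rfl, rfl⟩
  · simp only [List.cons_append, List.cons.injEq] at hp
    exact absurd ⟨l, r, c, d, hp.2⟩ h

theorem phi_eq_of_forall_spineStep_eq {p q : List V} (hpq : SpineStep p q)
    (huniq : ∀ s, SpineStep p s → s = q) (hq : NonBacktracking q) : phi p = q := by
  have hex : ∃ s, Relation.ReflTransGen SpineStep p s ∧ NonBacktracking s :=
    ⟨q, .single hpq, hq⟩
  unfold phi
  rw [dif_pos hex]
  obtain ⟨hs, hnb⟩ := hex.choose_spec
  rcases hs.cases_head with heq | ⟨m, hm, hms⟩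
  · exact absurd (heq ▸ hpq) hnb.not_spineStep
  · exact hq.eq_of_reflTransGen (huniq m hm ▸ hms)

theorem phi_cons_cons_cons {x y : V} {r : List V} (h : NonBacktracking (y :: x :: r)) :
    phi (x :: y :: x :: r) = x :: r := by
  refine phi_eq_of_forall_spineStep_eq ⟨[], r, x, y, rfl, rfl⟩ (fun s hs => ?_) h.of_cons
  obtain ⟨_, _, hp, rfl⟩ := hs.eq_of_cons h
  simp only [List.cons.injEq] at hp
  rw [hp.2.2]

end

theorem stmt_8_general {V : Type*}
    (a b : V)
    (q : List V) (hnb : NonBacktracking q)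
    (hstart : q.head? = some b) :
    phi (b :: phi (a :: q)) = q := by
  obtain ⟨t, rfl⟩ : ∃ t, q = b :: t := List.head?_eq_some_iff.mp hstart
  by_cases hta : ∃ r, t = a :: r
  · obtain ⟨r, rfl⟩ := hta
    rw [phi_cons_cons_cons hnb, phi_eq_self hnb]
  · have hnb' : NonBacktracking (a :: b :: t) := hnb.cons_cons fun r hr => hta ⟨r, hr⟩
    rw [phi_eq_self hnb', phi_cons_cons_cons hnb']

/-- For adjacent vertices `a, b`, the map `ψ_{a→b}` sends a non-backtracking walk
`q` starting at `a` to `φ(b⌢q)`. The composite `ψ_{a→b} ∘ ψ_{b→a}` is the identity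
on non-backtracking walks starting at `b`. -/
theorem stmt_8 {V : Type*} (G : AdjGraph V) (hconn : G.ConnectedL)
    (a b : V) (hab : G.Adj a b)
    (q : List V) (hq : IsWalkL G q) (hnb : NonBacktracking q)
    (hstart : q.head? = some b) :
    phi (b :: phi (a :: q)) = q :=
  stmt_8_general a b q hnb hstart
end
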